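/- If γ and δ are (k+1)-cores with γ strictly contained in δ, then the number of cells of γ with hook length at most k is strictly smaller than the number of cells of δ with hook length at most k. -/

import Mathlib

open scoped Classical

/-- A partition given as a weakly decreasing, finitely supported
function `ℕ → ℕ` (row `i`, counted from the bottom, has `p i` cells). -/
def IsPartitionFun (p : ℕ → ℕ) : Prop :=
  (∀ i, p (i + 1) ≤ p i) ∧ ∃ N, ∀ i, N ≤ i → p i = 0

/-- Hook length of the square `(i, j)` (0-indexed) in the partition `p`. -/
noncomputable def hookLen (p : ℕ → ℕ) (i j : ℕ) : ℕ :=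
  (p i - j) + Set.ncard {i' : ℕ | i < i' ∧ j < p i'}

/-- A partition is an `m`-core if no cell has hook length `m`. -/
def IsCore (m : ℕ) (p : ℕ → ℕ) : Prop :=
  ∀ i j, j < p i → hookLen p i j ≠ m

/-- Number of cells of row `i` of `p` whose hook length is at most `k`. -/
noncomputable def rowKB (k : ℕ) (p : ℕ → ℕ) (i : ℕ) : ℕ :=
  Set.ncard {j : ℕ | j < p i ∧ hookLen p i j ≤ k}

/-- Number of cells of column `j` of `p` whose hook length is at most `k`. -/
noncomputable def colKB (k : ℕ) (p : ℕ → ℕ) (j : ℕ) : ℕ :=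
  Set.ncard {i : ℕ | j < p i ∧ hookLen p i j ≤ k}

/-- The `(k+1)`-residue of the square `(i, j)`, namely `j - i mod (k+1)`. -/
def res (k i j : ℕ) : ZMod (k + 1) := (j : ZMod (k + 1)) - (i : ZMod (k + 1))

/-- The conjugate partition. -/
noncomputable def conjFun (p : ℕ → ℕ) (j : ℕ) : ℕ := Set.ncard {i : ℕ | j < p i}


/-!
Encode a partition `p` by its beta-set `{p i - i}` of beads in `ℤ`. The remaining positions
(gaps) are the numbers `j + 1 - p'_j`, and the cell `(i, j)` has hook length
`(p i - i) - (j + 1 - p'_j)`. So with `m = k + 1` the cells of hook length `≤ k` correspond to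
the pairs (bead `b`, gap `c`) with `c < b < c + m`; `p` is an `m`-core iff its beta-set is
closed under `b ↦ b - m`; and `γ ⊆ δ` implies that for every `x` there are at most as many
beads `≥ x` for `γ` as for `δ`, with equality far to the left.

If the larger core has a gap `y ≡ a (mod m)` just below a bead (a removable corner), the
reflection exchanging the positions `≡ a` and `≡ a + 1` gives a smaller `m`-core with exactly
one pair fewer: the pairs correspond, except that the pairs `(y + 1, y)` with `y ≡ a` are
traded for the pairs `(y + m + 1, y)`, and `y ↦ y + m` maps the latter onto the former minus
the lowest one. Reflecting both cores, or only the larger one when the smaller has no such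
corner, preserves all hypotheses, so the claim follows by induction on the number of pairs of
the larger core; if the larger core has no removable corner at all, the two cores coincide.
-/

open Set

def IsBetaSet (B : Set ℤ) : Prop := BddAbove B ∧ BddBelow Bᶜ

def IsCoreSet (m : ℤ) (B : Set ℤ) : Prop := ∀ b ∈ B, b - m ∈ B

noncomputable def beadsFrom (B : Set ℤ) (x : ℤ) : ℕ := (B ∩ Ici x).ncard

def BeadsLE (C D : Set ℤ) : Prop := ∀ x, beadsFrom C x ≤ beadsFrom D x

def SameCharge (C D : Set ℤ) : Prop := ∃ M, ∀ x ≤ M, beadsFrom C x = beadsFrom D x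

def smallHooks (m : ℤ) (B : Set ℤ) : Set (ℤ × ℤ) :=
  {q | q.1 ∈ B ∧ q.2 ∉ B ∧ q.2 < q.1 ∧ q.1 < q.2 + m}

def RemovableAt (m a : ℤ) (B : Set ℤ) : Prop := ∃ y, m ∣ y - a ∧ y ∉ B ∧ y + 1 ∈ B

def swapRunners (m a z : ℤ) : ℤ :=
  if m ∣ z - a then z + 1 else if m ∣ z - a - 1 then z - 1 else z

section BetaSet

variable {m a b c : ℤ} {B : Set ℤ}

lemma IsBetaSet.exists_forall_lt_mem (hB : IsBetaSet B) : ∃ L, ∀ z < L, z ∈ B := by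
  obtain ⟨L, hL⟩ := hB.2
  exact ⟨L, fun z hz => by_contra fun h => (hL h).not_gt hz⟩

lemma IsBetaSet.finite_inter_Ici (hB : IsBetaSet B) (x : ℤ) : (B ∩ Ici x).Finite :=
  BddBelow.finite_of_bddAbove ⟨x, fun _ h => h.2⟩ (hB.1.mono inter_subset_left)

lemma IsBetaSet.finite_setOf_bead_gap (hB : IsBetaSet B) (K : ℤ) :
    {q : ℤ × ℤ | q.1 ∈ B ∧ q.2 ∉ B ∧ q.2 ≤ q.1 + K}.Finite := by
  obtain ⟨⟨M, hM⟩, ⟨L, hL⟩⟩ := hB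
  refine ((finite_Icc (L - K) M).prod (finite_Icc L (M + K))).subset ?_
  rintro ⟨b, c⟩ ⟨hb, hc, hbc⟩
  have := hM hb
  have := hL hc
  simp only [mem_prod, mem_Icc]
  omega

lemma IsBetaSet.finite_setOf_notMem_add_mem (hB : IsBetaSet B) (K : ℤ) :
    {y | y ∉ B ∧ y + K ∈ B}.Finite := by
  obtain ⟨⟨M, hM⟩, ⟨L, hL⟩⟩ := hB
  exact BddBelow.finite_of_bddAbove ⟨L, fun y hy => hL hy.1⟩
    ⟨M - K, fun y hy => by have := hM hy.2; omega⟩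

lemma beadsFrom_eq_add (hB : IsBetaSet B) (x : ℤ) :
    beadsFrom B x = beadsFrom B (x + 1) + if x ∈ B then 1 else 0 := by
  have hIci : Ici x = insert x (Ici (x + 1)) := by
    ext z
    simp only [mem_Ici, mem_insert_iff]
    omega
  rw [beadsFrom, beadsFrom, hIci]
  split_ifs with hx
  · rw [inter_insert_of_mem hx, ncard_insert_of_notMem (fun h => by simp at h)
      (hB.finite_inter_Ici _)]
  · rw [inter_insert_of_notMem hx, add_zero]

lemma IsCoreSet.sub_mul_mem (hB : IsCoreSet m B) (hb : b ∈ B) (n : ℕ) : b - m * n ∈ B := by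
  induction n with
  | zero => simpa using hb
  | succ n ih => simpa [mul_add, sub_add_eq_sub_sub] using hB _ ih

lemma IsCoreSet.mem_of_dvd (hm : 0 < m) (hB : IsCoreSet m B) (hb : b ∈ B) (hcb : c ≤ b)
    (hd : m ∣ b - c) : c ∈ B := by
  obtain ⟨q, hq⟩ := hd
  have hq0 : 0 ≤ q := by nlinarith
  simpa [Int.toNat_of_nonneg hq0, ← hq] using hB.sub_mul_mem hb q.toNat

lemma IsCoreSet.add_one_mem_of_removableAt (hm : 0 < m) (hB : IsCoreSet m B)
    (hr : RemovableAt m a B) {y : ℤ} (hy : m ∣ y - a) (hyB : y ∈ B) : y + 1 ∈ B := by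
  obtain ⟨y₀, hy₀, hy₀B, hy₀B'⟩ := hr
  rcases le_or_gt y y₀ with h | h
  · exact hB.mem_of_dvd hm hy₀B' (by omega) (by simpa using dvd_sub hy₀ hy)
  · exact absurd (hB.mem_of_dvd hm hyB h.le (by simpa using dvd_sub hy hy₀)) hy₀B

lemma SameCharge.symm {C D : Set ℤ} (h : SameCharge C D) : SameCharge D C :=
  let ⟨M, hM⟩ := h
  ⟨M, fun x hx => (hM x hx).symm⟩

lemma SameCharge.trans {C D E : Set ℤ} (h : SameCharge C D) (h' : SameCharge D E) :
    SameCharge C E :=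
  let ⟨M, hM⟩ := h
  let ⟨M', hM'⟩ := h'
  ⟨min M M', fun x hx => (hM x (hx.trans (min_le_left _ _))).trans
    (hM' x (hx.trans (min_le_right _ _)))⟩

end BetaSet

section Residues

lemma le_or_eq_or_ge_of_dvd {m t : ℤ} (hm : 0 < m) (h : m ∣ t) :
    t ≤ -2 * m ∨ t = -m ∨ t = 0 ∨ t = m ∨ 2 * m ≤ t := by
  obtain ⟨q, rfl⟩ := h
  rcases (by omega : q ≤ -2 ∨ q = -1 ∨ q = 0 ∨ q = 1 ∨ 2 ≤ q) with h | rfl | rfl | rfl | h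
  · left; nlinarith
  · simp
  · simp
  · simp
  · right; right; right; right; nlinarith

/-- Everything `omega` needs to compare the residues of `u - a` and `v - a` modulo `m`. -/
lemma emod_sub_emod_cases {m : ℤ} (hm : 0 < m) (a u v : ℤ) :
    0 ≤ (u - a) % m ∧ (u - a) % m < m ∧ 0 ≤ (v - a) % m ∧ (v - a) % m < m ∧
      (u - v - ((u - a) % m - (v - a) % m) ≤ -2 * m ∨
        u - v - ((u - a) % m - (v - a) % m) = -m ∨
        u - v - ((u - a) % m - (v - a) % m) = 0 ∨
        u - v - ((u - a) % m - (v - a) % m) = m ∨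
        2 * m ≤ u - v - ((u - a) % m - (v - a) % m)) := by
  refine ⟨Int.emod_nonneg _ hm.ne', Int.emod_lt_of_pos _ hm, Int.emod_nonneg _ hm.ne',
    Int.emod_lt_of_pos _ hm, le_or_eq_or_ge_of_dvd hm ⟨(u - a) / m - (v - a) / m, ?_⟩⟩
  rw [Int.emod_def, Int.emod_def]
  ring

lemma dvd_sub_one_iff_emod_eq_one {m x : ℤ} (hm : 2 ≤ m) : m ∣ x - 1 ↔ x % m = 1 := by
  rw [Int.dvd_iff_emod_eq_zero, ← Int.emod_eq_emod_iff_emod_sub_eq_zero,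
    Int.emod_eq_of_lt zero_le_one (by omega)]

end Residues

section Swap

variable {m a x : ℤ} {B C D : Set ℤ}

local notation "σ" => swapRunners m a

lemma swapRunners_eq (hm : 2 ≤ m) (z : ℤ) :
    σ z = if (z - a) % m = 0 then z + 1 else if (z - a) % m = 1 then z - 1 else z := by
  simp only [swapRunners, Int.dvd_iff_emod_eq_zero, dvd_sub_one_iff_emod_eq_one hm]

lemma swapRunners_of_dvd {z : ℤ} (h : m ∣ z - a) : σ z = z + 1 := if_pos h

lemma swapRunners_add_one_of_dvd (hm : 2 ≤ m) {z : ℤ} (h : m ∣ z - a) : σ (z + 1) = z := by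
  have := emod_sub_emod_cases (m := m) (by omega) a (z + 1) z
  rw [Int.dvd_iff_emod_eq_zero] at h
  simp only [swapRunners_eq hm]
  split_ifs <;> omega

lemma swapRunners_mem_Icc (z : ℤ) : σ z ∈ Icc (z - 1) (z + 1) := by
  simp only [swapRunners, mem_Icc]
  split_ifs <;> omega

lemma swapRunners_involutive (hm : 2 ≤ m) : Function.Involutive σ := by
  intro z
  have := emod_sub_emod_cases (m := m) (by omega) a (z + 1) z
  have := emod_sub_emod_cases (m := m) (by omega) a (z - 1) z
  simp only [swapRunners_eq hm]
  split_ifs <;> omega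

lemma swapRunners_sub_self (hm : 2 ≤ m) (z : ℤ) : σ (z - m) = σ z - m := by
  have := emod_sub_emod_cases (m := m) (by omega) a (z - m) z
  simp only [swapRunners_eq hm]
  split_ifs <;> omega

lemma preimage_swapRunners_Ici_of_not_dvd (hm : 2 ≤ m) (hx : ¬ m ∣ x - 1 - a) :
    σ ⁻¹' Ici x = Ici x := by
  ext z
  have := emod_sub_emod_cases (m := m) (by omega) a z (x - 1)
  rw [Int.dvd_iff_emod_eq_zero] at hx
  simp only [mem_preimage, mem_Ici, swapRunners_eq hm]
  split_ifs <;> omega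

lemma preimage_swapRunners_Ici_of_dvd (hm : 2 ≤ m) (hx : m ∣ x - 1 - a) :
    σ ⁻¹' Ici x = Ici (x - 1) \ {x} := by
  ext z
  have := emod_sub_emod_cases (m := m) (by omega) a z (x - 1)
  rw [Int.dvd_iff_emod_eq_zero] at hx
  simp only [mem_preimage, mem_Ici, mem_sdiff, mem_singleton_iff, swapRunners_eq hm]
  split_ifs <;> omega

lemma IsBetaSet.preimage_swapRunners (hB : IsBetaSet B) : IsBetaSet (σ ⁻¹' B) := by
  obtain ⟨⟨M, hM⟩, ⟨L, hL⟩⟩ := hB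
  refine ⟨⟨M + 1, fun z hz => ?_⟩, ⟨L - 1, fun z hz => ?_⟩⟩ <;>
    have := swapRunners_mem_Icc (m := m) (a := a) z <;> rw [mem_Icc] at this
  · have := hM hz
    omega
  · have := hL hz
    omega

lemma IsCoreSet.preimage_swapRunners (hm : 2 ≤ m) (hB : IsCoreSet m B) :
    IsCoreSet m (σ ⁻¹' B) := fun z hz => by
  simpa only [mem_preimage, swapRunners_sub_self hm] using hB _ hz

lemma beadsFrom_preimage_swapRunners (hm : 2 ≤ m) (B : Set ℤ) (x : ℤ) :
    beadsFrom (σ ⁻¹' B) x = (B ∩ σ ⁻¹' Ici x).ncard := by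
  have hσ := swapRunners_involutive (a := a) hm
  rw [beadsFrom, ← ncard_preimage_of_injective_subset_range hσ.injective
    (by rw [hσ.surjective.range_eq]; exact subset_univ _)]
  congr 1
  ext z
  simp [hσ z]

lemma beadsFrom_swapRunners_of_not_dvd (hm : 2 ≤ m) (hx : ¬ m ∣ x - 1 - a) :
    beadsFrom (σ ⁻¹' B) x = beadsFrom B x := by
  rw [beadsFrom_preimage_swapRunners hm, preimage_swapRunners_Ici_of_not_dvd hm hx, beadsFrom]

lemma beadsFrom_swapRunners_of_dvd (hm : 2 ≤ m) (hB : IsBetaSet B) (hx : m ∣ x - 1 - a) :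
    beadsFrom (σ ⁻¹' B) x + (if x ∈ B then 1 else 0) = beadsFrom B (x - 1) := by
  rw [beadsFrom_preimage_swapRunners hm, preimage_swapRunners_Ici_of_dvd hm hx,
    ← inter_sdiff_assoc, beadsFrom]
  split_ifs with h
  · exact ncard_sdiff_singleton_add_one ⟨h, by simp⟩ (hB.finite_inter_Ici _)
  · rw [sdiff_singleton_eq_self (fun h' => h h'.1), add_zero]

lemma sameCharge_preimage_swapRunners (hm : 2 ≤ m) (hB : IsBetaSet B) :
    SameCharge (σ ⁻¹' B) B := by
  obtain ⟨L, hL⟩ := hB.exists_forall_lt_mem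
  refine ⟨L - 1, fun x hx => ?_⟩
  by_cases hd : m ∣ x - 1 - a
  · have h₁ := beadsFrom_swapRunners_of_dvd hm hB hd
    have h₂ := beadsFrom_eq_add hB (x - 1)
    rw [sub_add_cancel, if_pos (hL _ (by omega))] at h₂
    rw [if_pos (hL _ (by omega))] at h₁
    omega
  · exact beadsFrom_swapRunners_of_not_dvd hm hd

lemma beadsLE_preimage_swapRunners_right (hm : 2 ≤ m) (hC : IsBetaSet C) (hD : IsBetaSet D)
    (hC' : ∀ y, m ∣ y - a → y + 1 ∈ C → y ∈ C) (hD' : ∀ y, m ∣ y - a → y ∈ D → y + 1 ∈ D)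
    (h : BeadsLE C D) : BeadsLE C (σ ⁻¹' D) := by
  intro x
  by_cases hx : m ∣ x - 1 - a
  · have hσ := beadsFrom_swapRunners_of_dvd hm hD hx
    have eC₁ := beadsFrom_eq_add hC (x - 1)
    have eD₁ := beadsFrom_eq_add hD (x - 1)
    have eC := beadsFrom_eq_add hC x
    have eD := beadsFrom_eq_add hD x
    have := h (x - 1)
    have := h x
    have := h (x + 1)
    have iC : x ∈ C → x - 1 ∈ C := fun h => hC' (x - 1) hx (by simpa using h)
    have iD : x - 1 ∈ D → x ∈ D := fun h => by simpa using hD' (x - 1) hx h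
    rw [sub_add_cancel] at eC₁ eD₁
    split_ifs at hσ eC₁ eD₁ eC eD <;> first | omega | tauto
  · rw [beadsFrom_swapRunners_of_not_dvd hm hx]
    exact h x

lemma beadsLE_preimage_swapRunners (hm : 2 ≤ m) (hC : IsBetaSet C) (hD : IsBetaSet D)
    (hC' : ∀ y, m ∣ y - a → y ∈ C → y + 1 ∈ C) (h : BeadsLE C D) :
    BeadsLE (σ ⁻¹' C) (σ ⁻¹' D) := by
  intro x
  by_cases hx : m ∣ x - 1 - a
  · have hσC := beadsFrom_swapRunners_of_dvd hm hC hx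
    have hσD := beadsFrom_swapRunners_of_dvd hm hD hx
    have eC₁ := beadsFrom_eq_add hC (x - 1)
    have eD₁ := beadsFrom_eq_add hD (x - 1)
    have eC := beadsFrom_eq_add hC x
    have eD := beadsFrom_eq_add hD x
    have := h (x - 1)
    have := h (x + 1)
    have iC : x - 1 ∈ C → x ∈ C := fun h => by simpa using hC' (x - 1) hx h
    rw [sub_add_cancel] at eC₁ eD₁
    split_ifs at hσC hσD eC₁ eD₁ eC eD <;> first | omega | tauto
  · rw [beadsFrom_swapRunners_of_not_dvd hm hx, beadsFrom_swapRunners_of_not_dvd hm hx]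
    exact h x

end Swap

section SmallHooks

variable {m a : ℤ} {B : Set ℤ}

local notation "σ" => swapRunners m a

lemma window_swapRunners_iff (hm : 2 ≤ m) {b c : ℤ}
    (h₁ : ¬ (m ∣ b - a ∧ c = b + 1)) (h₂ : ¬ (m ∣ b - a ∧ c = b + 1 - m)) :
    (σ c < σ b ∧ σ b < σ c + m) ∨ (m ∣ c - a ∧ c + 1 = b) ↔
      (c < b ∧ b < c + m) ∨ (m ∣ c - a ∧ c + (m + 1) = b) := by
  have := emod_sub_emod_cases (m := m) (by omega) a b c
  simp only [swapRunners_eq hm, Int.dvd_iff_emod_eq_zero] at h₁ h₂ ⊢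
  split_ifs <;> omega

lemma setOf_window_swapRunners (hm : 2 ≤ m) (hB : IsCoreSet m B) (hr : RemovableAt m a B) :
    {q : ℤ × ℤ | q.1 ∈ B ∧ q.2 ∉ B ∧
      ((σ q.2 < σ q.1 ∧ σ q.1 < σ q.2 + m) ∨ (m ∣ q.2 - a ∧ q.2 + 1 = q.1))} =
    {q : ℤ × ℤ | q.1 ∈ B ∧ q.2 ∉ B ∧
      ((q.2 < q.1 ∧ q.1 < q.2 + m) ∨ (m ∣ q.2 - a ∧ q.2 + (m + 1) = q.1))} := by
  ext ⟨b, c⟩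
  refine and_congr_right fun hb => and_congr_right fun hc => window_swapRunners_iff hm ?_ ?_
  · exact fun ⟨hd, hcb⟩ => hc (hcb ▸ hB.add_one_mem_of_removableAt (by omega) hr hd hb)
  · exact fun ⟨hd, hcb⟩ => hc (hcb ▸ hB _ (hB.add_one_mem_of_removableAt (by omega) hr hd hb))

lemma ncard_smallHooks_preimage_swapRunners (hm : 2 ≤ m) (B : Set ℤ) :
    (smallHooks m (σ ⁻¹' B)).ncard =
      {q : ℤ × ℤ | q.1 ∈ B ∧ q.2 ∉ B ∧ σ q.2 < σ q.1 ∧ σ q.1 < σ q.2 + m}.ncard := by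
  have hσ := (swapRunners_involutive (a := a) hm).prodMap (swapRunners_involutive (a := a) hm)
  rw [← ncard_preimage_of_injective_subset_range hσ.injective
    (by rw [hσ.surjective.range_eq]; exact subset_univ _)]
  congr 1
  ext ⟨b, c⟩
  simp [smallHooks, swapRunners_involutive hm b, swapRunners_involutive hm c]

lemma ncard_setOf_bead_gap_eq (K : ℤ) :
    {q : ℤ × ℤ | q.1 ∈ B ∧ q.2 ∉ B ∧ m ∣ q.2 - a ∧ q.2 + K = q.1}.ncard =
      {y | m ∣ y - a ∧ y ∉ B ∧ y + K ∈ B}.ncard := by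
  rw [← ncard_image_of_injective _
    (fun y y' h => (Prod.mk.inj h).2 : Function.Injective fun y : ℤ => (y + K, y))]
  congr 1
  ext ⟨b, c⟩
  simp only [mem_ofPred_eq, mem_image, Prod.mk.injEq, exists_eq_right_right]
  constructor
  · rintro ⟨hb, hc, hd, rfl⟩
    exact ⟨⟨hd, hc, hb⟩, rfl⟩
  · rintro ⟨⟨hd, hc, hb⟩, rfl⟩
    exact ⟨hb, hc, hd, rfl⟩

lemma ncard_setOf_removable_eq (hm : 0 < m) (hB : IsBetaSet B) (hc : IsCoreSet m B)
    (hr : RemovableAt m a B) :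
    {y | m ∣ y - a ∧ y ∉ B ∧ y + 1 ∈ B}.ncard =
      {y | m ∣ y - a ∧ y ∉ B ∧ y + (m + 1) ∈ B}.ncard + 1 := by
  obtain ⟨L, hL⟩ := hB.exists_forall_lt_mem
  obtain ⟨y₀, ⟨hy₀, hy₀B, hy₀B'⟩, hmin⟩ := Int.exists_least_of_bdd
    ⟨L, fun y hy => not_lt.1 fun h => hy.2.1 (hL y h)⟩ hr
  have hy₀m : y₀ - m ∈ B := by
    by_contra h
    have := hmin (y₀ - m) ⟨by simpa [sub_right_comm] using dvd_sub hy₀ dvd_rfl, h,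
      by simpa [sub_add_eq_add_sub] using hc _ hy₀B'⟩
    omega
  have hset : {y | m ∣ y - a ∧ y ∉ B ∧ y + 1 ∈ B} =
      insert y₀ ((· + m) '' {y | m ∣ y - a ∧ y ∉ B ∧ y + (m + 1) ∈ B}) := by
    ext y
    simp only [mem_insert_iff, mem_image, mem_ofPred_eq]
    constructor
    · rintro ⟨hy, hyB, hyB'⟩
      rcases (hmin y ⟨hy, hyB, hyB'⟩).eq_or_lt with rfl | hlt
      · exact Or.inl rfl
      have hdvd : m ∣ y - y₀ := by simpa using dvd_sub hy hy₀
      have := Int.le_of_dvd (by omega) hdvd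
      refine Or.inr ⟨y - m, ⟨by simpa [sub_right_comm] using dvd_sub hy dvd_rfl, fun h => hy₀B
        (hc.mem_of_dvd hm h (by omega) (by simpa [sub_right_comm] using dvd_sub hdvd dvd_rfl)),
        by convert hyB' using 1; ring⟩, by ring⟩
    · rintro (rfl | ⟨z, ⟨hz, hzB, hzB'⟩, rfl⟩)
      · exact ⟨hy₀, hy₀B, hy₀B'⟩
      · exact ⟨by simpa [add_sub_right_comm] using dvd_add hz dvd_rfl,
          fun h => hzB (by simpa using hc _ h), by rwa [add_assoc]⟩
  have hy₀' : y₀ ∉ (· + m) '' {y | m ∣ y - a ∧ y ∉ B ∧ y + (m + 1) ∈ B} := by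
    rintro ⟨z, ⟨-, hzB, -⟩, hz⟩
    exact hzB (by simpa [← hz] using hy₀m)
  rw [hset, ncard_insert_of_notMem hy₀'
    (((hB.finite_setOf_notMem_add_mem (m + 1)).subset fun y hy => hy.2).image _),
    ncard_image_of_injective _ (add_left_injective m)]

theorem ncard_smallHooks_swapRunners (hm : 2 ≤ m) (hB : IsBetaSet B) (hc : IsCoreSet m B)
    (hr : RemovableAt m a B) :
    (smallHooks m (σ ⁻¹' B)).ncard + 1 = (smallHooks m B).ncard := by
  have hU := congrArg ncard (setOf_window_swapRunners hm hc hr)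
  simp only [and_or_left, ofPred_or] at hU
  change _ = (smallHooks m B ∪ _).ncard at hU
  have hd₁ : Disjoint {q : ℤ × ℤ | q.1 ∈ B ∧ q.2 ∉ B ∧ σ q.2 < σ q.1 ∧ σ q.1 < σ q.2 + m}
      {q | q.1 ∈ B ∧ q.2 ∉ B ∧ m ∣ q.2 - a ∧ q.2 + 1 = q.1} := by
    rw [disjoint_left]
    rintro ⟨b, c⟩ ⟨-, -, hw, -⟩ ⟨-, -, hd, rfl : c + 1 = b⟩
    rw [swapRunners_of_dvd hd, swapRunners_add_one_of_dvd hm hd] at hw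
    omega
  have hd₂ : Disjoint (smallHooks m B)
      {q | q.1 ∈ B ∧ q.2 ∉ B ∧ m ∣ q.2 - a ∧ q.2 + (m + 1) = q.1} := by
    refine disjoint_left.2 fun q hq hq' => ?_
    have := hq.2.2
    have := hq'.2.2.2
    omega
  have hQ := (hB.finite_setOf_bead_gap 2).subset fun (q : ℤ × ℤ) (hq : q ∈
      {q : ℤ × ℤ | q.1 ∈ B ∧ q.2 ∉ B ∧ σ q.2 < σ q.1 ∧ σ q.1 < σ q.2 + m}) => by
    have h₁ := swapRunners_mem_Icc (m := m) (a := a) q.1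
    have h₂ := swapRunners_mem_Icc (m := m) (a := a) q.2
    rw [mem_Icc] at h₁ h₂
    have := hq.2.2.1
    exact ⟨hq.1, hq.2.1, by omega⟩
  have hP := (hB.finite_setOf_bead_gap 0).subset fun (q : ℤ × ℤ) (hq : q ∈ smallHooks m B) =>
    ⟨hq.1, hq.2.1, by have := hq.2.2.1; omega⟩
  rw [ncard_union_eq hd₁ hQ ((hB.finite_setOf_bead_gap 1).subset fun q hq =>
      ⟨hq.1, hq.2.1, by have := hq.2.2.2; omega⟩),
    ncard_union_eq hd₂ hP ((hB.finite_setOf_bead_gap (m + 1)).subset fun q hq =>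
      ⟨hq.1, hq.2.1, by have := hq.2.2.2; omega⟩), ncard_setOf_bead_gap_eq,
    ncard_setOf_bead_gap_eq, ncard_setOf_removable_eq (by omega) hB hc hr] at hU
  rw [ncard_smallHooks_preimage_swapRunners hm]
  omega

end SmallHooks

lemma eq_of_beadsLE {C D : Set ℤ} (hC : IsBetaSet C) (hD : IsBetaSet D) (hD₁ : IsCoreSet 1 D)
    (hle : BeadsLE C D) (hq : SameCharge C D) : C = D := by
  have hCD : C ⊆ D := by
    intro z hz
    by_contra hzD
    have hD₀ : D ∩ Ici z = ∅ := eq_empty_of_forall_notMem fun w ⟨hw, hzw⟩ =>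
      hzD (hD₁.mem_of_dvd one_pos hw hzw (one_dvd _))
    have := hle z
    rw [beadsFrom, beadsFrom, hD₀, ncard_empty, nonpos_iff_eq_zero,
      ncard_eq_zero (hC.finite_inter_Ici z)] at this
    exact this.subset ⟨hz, self_mem_Ici⟩
  refine hCD.antisymm fun z hz => by_contra fun hzC => ?_
  obtain ⟨M, hM⟩ := hq
  refine (ncard_lt_ncard ?_ (hD.finite_inter_Ici _)).ne (hM (min M z) (min_le_left _ _))
  exact (inter_subset_inter_left _ hCD).ssubset_of_not_subset
    fun h => hzC (h ⟨hz, mem_Ici.2 (min_le_right _ _)⟩).1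

theorem ncard_smallHooks_lt_of_beadsLE {m : ℤ} (hm : 0 < m) {C D : Set ℤ} (hC : IsBetaSet C)
    (hD : IsBetaSet D) (hCm : IsCoreSet m C) (hDm : IsCoreSet m D) (hle : BeadsLE C D)
    (hq : SameCharge C D) (hne : C ≠ D) : (smallHooks m C).ncard < (smallHooks m D).ncard := by
  induction hn : (smallHooks m D).ncard using Nat.strong_induction_on generalizing C D with
  | _ n ih =>
  by_cases hcorner : ∃ a, a ∉ D ∧ a + 1 ∈ D
  swap
  · refine absurd (eq_of_beadsLE hC hD (fun b hb => by_contra fun h => ?_) hle hq) hne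
    exact hcorner ⟨b - 1, h, by simpa using hb⟩
  obtain ⟨a, ha, ha'⟩ := hcorner
  have hm₂ : 2 ≤ m := by
    by_contra h
    obtain rfl : m = 1 := by omega
    exact ha (by simpa using hDm _ ha')
  have hrD : RemovableAt m a D := ⟨a, by simp, ha, ha'⟩
  have hσD := ncard_smallHooks_swapRunners hm₂ hD hDm hrD
  have hqD := sameCharge_preimage_swapRunners (a := a) hm₂ hD
  by_cases hrC : RemovableAt m a C
  · have := ih _ (by omega) hC.preimage_swapRunners hD.preimage_swapRunners
      (hCm.preimage_swapRunners hm₂) (hDm.preimage_swapRunners hm₂)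
      (beadsLE_preimage_swapRunners hm₂ hC hD
        (fun y hy => hCm.add_one_mem_of_removableAt hm hrC hy) hle)
      (((sameCharge_preimage_swapRunners hm₂ hC).trans hq).trans hqD.symm)
      ((swapRunners_involutive hm₂).preimage.injective.ne hne) rfl
    have := ncard_smallHooks_swapRunners hm₂ hC hCm hrC
    omega
  · rcases eq_or_ne C (swapRunners m a ⁻¹' D) with rfl | hne'
    · omega
    have := ih _ (by omega) hC hD.preimage_swapRunners hCm (hDm.preimage_swapRunners hm₂)
      (beadsLE_preimage_swapRunners_right hm₂ hC hD
        (fun y hy h => by_contra fun h' => hrC ⟨y, hy, h', h⟩)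
        (fun y hy => hDm.add_one_mem_of_removableAt hm hrD hy) hle)
      (hq.trans hqD.symm) hne' rfl
    omega

lemma Set.Finite.eq_Iio_ncard {s : Set ℕ} (hs : s.Finite) (h : IsLowerSet s) :
    s = Iio s.ncard := by
  obtain h | ⟨n, rfl⟩ := h.eq_univ_or_Iio
  · exact absurd (h ▸ hs) infinite_univ
  · rw [ncard_Iio_nat]

def betaNum (p : ℕ → ℕ) (i : ℕ) : ℤ := p i - i

def betaSet (p : ℕ → ℕ) : Set ℤ := range (betaNum p)

noncomputable def gapNum (p : ℕ → ℕ) (j : ℕ) : ℤ := j + 1 - conjFun p j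

section Partition

variable {p γ δ : ℕ → ℕ} {i j : ℕ}

lemma IsPartitionFun.antitone (hp : IsPartitionFun p) : Antitone p :=
  antitone_nat_of_succ_le hp.1

lemma IsPartitionFun.setOf_lt_eq_Iio (hp : IsPartitionFun p) (j : ℕ) :
    {i | j < p i} = Iio (conjFun p j) := by
  obtain ⟨N, hN⟩ := hp.2
  refine Finite.eq_Iio_ncard ((finite_Iio N).subset fun i hi => ?_)
    fun i i' hii' hi' => lt_of_lt_of_le hi' (hp.antitone hii')
  by_contra h
  have := hN i (not_lt.1 h)
  simp_all

lemma IsPartitionFun.lt_conjFun_iff (hp : IsPartitionFun p) : i < conjFun p j ↔ j < p i :=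
  (Set.ext_iff.1 (hp.setOf_lt_eq_Iio j) i).symm

lemma IsPartitionFun.betaNum_strictAnti (hp : IsPartitionFun p) : StrictAnti (betaNum p) :=
  strictAnti_nat_of_succ_lt fun i => by
    have := hp.1 i
    simp only [betaNum]
    omega

lemma IsPartitionFun.gapNum_strictMono (hp : IsPartitionFun p) : StrictMono (gapNum p) :=
  strictMono_nat_of_lt_succ fun j => by
    have : conjFun p (j + 1) ≤ conjFun p j := by
      by_contra h
      have := hp.lt_conjFun_iff.1 (not_le.1 h)
      exact lt_irrefl _ (hp.lt_conjFun_iff (j := j).2 (by omega))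
    simp only [gapNum]
    omega

lemma IsPartitionFun.finite_setOf_le_betaNum (hp : IsPartitionFun p) (x : ℤ) :
    {i | x ≤ betaNum p i}.Finite :=
  (finite_Iic (p 0 - x).toNat).subset fun i hi => by
    have := hp.antitone (Nat.zero_le i)
    simp only [mem_ofPred_eq, betaNum] at hi
    simp only [mem_Iic]
    omega

lemma IsPartitionFun.hookLen_eq (hp : IsPartitionFun p) (h : j < p i) :
    (hookLen p i j : ℤ) = betaNum p i - gapNum p j := by
  have hset : {i' | i < i' ∧ j < p i'} = Ioo i (conjFun p j) := by
    ext i'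
    simp [hp.lt_conjFun_iff]
  have := hp.lt_conjFun_iff.2 h
  rw [hookLen, hset, ncard_Ioo_nat]
  simp only [betaNum, gapNum]
  omega

lemma IsPartitionFun.gapNum_lt_betaNum_iff (hp : IsPartitionFun p) :
    gapNum p j < betaNum p i ↔ j < p i := by
  have := hp.lt_conjFun_iff (i := i) (j := j)
  simp only [gapNum, betaNum]
  omega

lemma IsPartitionFun.gapNum_notMem_betaSet (hp : IsPartitionFun p) : gapNum p j ∉ betaSet p := by
  rintro ⟨i, h⟩
  have := hp.lt_conjFun_iff (i := i) (j := j)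
  simp only [gapNum, betaNum] at h
  omega

lemma IsPartitionFun.exists_gapNum_eq (hp : IsPartitionFun p) {z : ℤ} (hz : z ∉ betaSet p) :
    ∃ j, gapNum p j = z := by
  set n := {i | z < betaNum p i}.ncard
  have hlt : ∀ i, z < betaNum p i ↔ i < n := by
    have hn : {i | z < betaNum p i} = Iio n := Finite.eq_Iio_ncard
      ((hp.finite_setOf_le_betaNum z).subset fun i hi => le_of_lt (α := ℤ) hi)
      fun i i' hii' hi' => lt_of_lt_of_le hi' (hp.betaNum_strictAnti.antitone hii')
    exact fun i => Set.ext_iff.1 hn i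
  have hbn : betaNum p n < z :=
    lt_of_le_of_ne (not_lt.1 fun h => lt_irrefl n ((hlt n).1 h)) fun h => hz ⟨n, h⟩
  simp only [betaNum] at hbn
  have hconj : conjFun p (z + n - 1).toNat = n := by
    rw [← Iio_inj, ← hp.setOf_lt_eq_Iio]
    ext i
    simp only [mem_ofPred_eq, mem_Iio]
    constructor
    · intro h
      by_contra h'
      have := hp.antitone (not_lt.1 h')
      omega
    · intro h
      have h₁ := (hlt (n - 1)).2 (by omega)
      have := hp.antitone (show i ≤ n - 1 by omega)
      simp only [betaNum] at h₁
      omega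
  exact ⟨(z + n - 1).toNat, by simp only [gapNum, hconj]; omega⟩

lemma IsPartitionFun.isBetaSet_betaSet (hp : IsPartitionFun p) : IsBetaSet (betaSet p) := by
  obtain ⟨N, hN⟩ := hp.2
  refine ⟨⟨p 0, ?_⟩, ⟨-N, fun z hz => not_lt.1 fun h => hz ⟨(-z).toNat, ?_⟩⟩⟩
  · rintro _ ⟨i, rfl⟩
    have := hp.antitone (Nat.zero_le i)
    simp only [betaNum]
    omega
  · simp only [betaNum, hN _ (by omega : N ≤ (-z).toNat)]
    omega

lemma IsPartitionFun.isCoreSet_betaSet (hp : IsPartitionFun p) {m : ℕ} (h : IsCore m p) :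
    IsCoreSet m (betaSet p) := by
  rintro _ ⟨i, rfl⟩
  by_contra hz
  obtain ⟨j, hj⟩ := hp.exists_gapNum_eq hz
  have hm : m ≠ 0 := fun h₀ => hz ⟨i, by simp [h₀]⟩
  have hji := (hp.gapNum_lt_betaNum_iff (i := i) (j := j)).1 (by omega)
  exact h i j hji (by have := hp.hookLen_eq hji; omega)

lemma IsPartitionFun.ncard_setOf_hookLen_le (hp : IsPartitionFun p) (k : ℕ) :
    {x : ℕ × ℕ | x.2 < p x.1 ∧ hookLen p x.1 x.2 ≤ k}.ncard =
      (smallHooks ((k + 1 : ℕ) : ℤ) (betaSet p)).ncard := by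
  rw [← ncard_image_of_injective _
    (hp.betaNum_strictAnti.injective.prodMap hp.gapNum_strictMono.injective)]
  congr 1
  ext ⟨b, c⟩
  constructor
  · rintro ⟨⟨i, j⟩, ⟨hj, hk⟩, he⟩
    dsimp only at hj hk
    simp only [Prod.map, Prod.mk.injEq] at he
    obtain ⟨rfl, rfl⟩ := he
    have := hp.hookLen_eq hj
    exact ⟨⟨i, rfl⟩, hp.gapNum_notMem_betaSet, hp.gapNum_lt_betaNum_iff.2 hj,
      by push_cast; omega⟩
  · rintro ⟨⟨i, rfl⟩, hc, hlt, hlt'⟩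
    obtain ⟨j, rfl⟩ := hp.exists_gapNum_eq hc
    have hj := hp.gapNum_lt_betaNum_iff.1 hlt
    have := hp.hookLen_eq hj
    exact ⟨(i, j), ⟨hj, show hookLen p i j ≤ k by push_cast at hlt'; omega⟩, rfl⟩

lemma IsPartitionFun.beadsFrom_betaSet (hp : IsPartitionFun p) (x : ℤ) :
    beadsFrom (betaSet p) x = {i | x ≤ betaNum p i}.ncard := by
  rw [beadsFrom, ← ncard_image_of_injective _ hp.betaNum_strictAnti.injective]
  congr 1
  ext z
  simp only [betaSet, mem_inter_iff, mem_range, mem_Ici, mem_image, mem_ofPred_eq]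
  constructor
  · rintro ⟨⟨i, rfl⟩, hx⟩
    exact ⟨i, hx, rfl⟩
  · rintro ⟨i, hx, rfl⟩
    exact ⟨⟨i, rfl⟩, hx⟩

lemma beadsLE_betaSet (hγ : IsPartitionFun γ) (hδ : IsPartitionFun δ) (h : ∀ i, γ i ≤ δ i) :
    BeadsLE (betaSet γ) (betaSet δ) := fun x => by
  rw [hγ.beadsFrom_betaSet, hδ.beadsFrom_betaSet]
  refine ncard_le_ncard (fun i hi => ?_) (hδ.finite_setOf_le_betaNum x)
  have := h i
  simp only [mem_ofPred_eq, betaNum] at hi ⊢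
  omega

lemma setOf_le_betaNum_eq {N : ℕ} (hN : ∀ i, N ≤ i → p i = 0) {x : ℤ} (hx : x ≤ -N) :
    {i | x ≤ betaNum p i} = {i : ℕ | (i : ℤ) ≤ -x} := by
  ext i
  simp only [mem_ofPred_eq, betaNum]
  by_cases hi : N ≤ i
  · simp only [hN i hi]
    omega
  · omega

lemma sameCharge_betaSet (hγ : IsPartitionFun γ) (hδ : IsPartitionFun δ) :
    SameCharge (betaSet γ) (betaSet δ) := by
  obtain ⟨N, hN⟩ := hγ.2
  obtain ⟨N', hN'⟩ := hδ.2
  refine ⟨-(N + N' : ℕ), fun x hx => ?_⟩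
  push_cast at hx
  rw [hγ.beadsFrom_betaSet, hδ.beadsFrom_betaSet, setOf_le_betaNum_eq hN (by omega),
    setOf_le_betaNum_eq hN' (by omega)]

lemma IsPartitionFun.eq_of_betaSet_eq (hγ : IsPartitionFun γ) (hδ : IsPartitionFun δ)
    (h : betaSet γ = betaSet δ) : γ = δ := by
  have := (StrictMono.range_inj (β := ℕ) (γ := ℤᵒᵈ) hγ.betaNum_strictAnti
    hδ.betaNum_strictAnti).1 h
  funext i
  have := congrFun this i
  simp only [betaNum] at this
  omega

end Partition

/-- If the `(k+1)`-core `γ` is strictly contained in the `(k+1)`-core `δ`, then `γ` has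
strictly fewer cells with `k`-bounded hook than `δ`. -/
theorem stmt14 (k : ℕ) (γ δ : ℕ → ℕ)
    (hγ : IsPartitionFun γ) (hγcore : IsCore (k + 1) γ)
    (hδ : IsPartitionFun δ) (hδcore : IsCore (k + 1) δ)
    (hsub : ∀ i, γ i ≤ δ i) (hne : γ ≠ δ) :
    Set.ncard {x : ℕ × ℕ | x.2 < γ x.1 ∧ hookLen γ x.1 x.2 ≤ k}
      < Set.ncard {x : ℕ × ℕ | x.2 < δ x.1 ∧ hookLen δ x.1 x.2 ≤ k} := by
  rw [hγ.ncard_setOf_hookLen_le, hδ.ncard_setOf_hookLen_le]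
  exact ncard_smallHooks_lt_of_beadsLE (by positivity) hγ.isBetaSet_betaSet hδ.isBetaSet_betaSet
    (hγ.isCoreSet_betaSet hγcore) (hδ.isCoreSet_betaSet hδcore) (beadsLE_betaSet hγ hδ hsub)
    (sameCharge_betaSet hγ hδ) (mt (hγ.eq_of_betaSet_eq hδ) hne)
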